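/- arXiv:1902.06502 — 2 statements merged into one kernel-verified Lean document; each statement's English description precedes it below -/
import Mathlib

section
/- For every special orthogonal matrix R ∈ SO(n) there exists a real skew-symmetric n×n matrix V such that R = exp_m(V); i.e., the restriction of the matrix exponential to the skew-symmetric matrices is a surjective map onto SO(n). -/
/-!
Conjugating by an orthonormal eigenbasis of the symmetric matrix `R + Rᵀ` turns `R` into
`P = diagonal c + A` with `A` skew; orthogonality of `P` says exactly that `A` commutes with
`diagonal c` and `A² = diagonal (c² - 1)`. With `θ = arccos c`, the skew matrix
`V = diagonal (θ / sin θ) * A + π • J`, where `J² = -1` on the `-1`-eigenspace of `P`,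
satisfies `V² = -diagonal θ²`, so summing the exponential series gives
`exp V = cos θ + V sinc θ = P`. Such a `J` exists because the `-1`-eigenspace has even
dimension: flipping the sign of `P` there gives a matrix of the same shape without eigenvalue
`-1`, hence an exponential, hence of positive determinant, while `det P = 1`.
-/

open Matrix Real
open scoped Nat

namespace Real

lemma hasSum_cos_neg_sq_pow (x : ℝ) :
    HasSum (fun k : ℕ => ((2 * k)! : ℝ)⁻¹ * (-x ^ 2) ^ k) (cos x) := by
  refine (hasSum_cos x).congr_fun fun k => ?_
  rw [neg_pow, pow_mul]
  ring

lemma hasSum_sinc_neg_sq_pow (x : ℝ) :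
    HasSum (fun k : ℕ => ((2 * k + 1)! : ℝ)⁻¹ * (-x ^ 2) ^ k) (sinc x) := by
  rcases eq_or_ne x 0 with rfl | hx
  · rw [sinc_zero]
    convert hasSum_ite_eq 0 (1 : ℝ) using 1
    funext k
    rcases eq_or_ne k 0 with rfl | hk <;> simp [*]
  · rw [sinc_of_ne_zero hx]
    refine ((hasSum_sin x).div_const x).congr_fun fun k => ?_
    rw [neg_pow, ← pow_mul]
    field_simp
    ring

lemma sinc_pi : sinc π = 0 := by
  rw [sinc_of_ne_zero pi_ne_zero, sin_pi, zero_div]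

lemma arccos_div_sin_arccos_sq_mul {x : ℝ} (hx₁ : -1 < x) (hx₂ : x ≤ 1) :
    (arccos x / sin (arccos x)) ^ 2 * (1 - x ^ 2) = arccos x ^ 2 := by
  rcases hx₂.eq_or_lt with rfl | hx₂
  · simp
  have hpos : 0 < 1 - x ^ 2 := by nlinarith
  have hsin : sin (arccos x) ^ 2 = 1 - x ^ 2 := by rw [sin_arccos, sq_sqrt hpos.le]
  have : sin (arccos x) ≠ 0 := by rw [sin_arccos]; exact (sqrt_pos.mpr hpos).ne'
  rw [← hsin]
  field_simp

lemma arccos_div_sin_arccos_mul_sinc {x : ℝ} (hx₁ : -1 < x) (hx₂ : x < 1) :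
    arccos x / sin (arccos x) * sinc (arccos x) = 1 := by
  have h₀ : arccos x ≠ 0 := (arccos_pos.mpr hx₂).ne'
  have h₁ : sin (arccos x) ≠ 0 := by
    rw [sin_arccos]; exact (sqrt_pos.mpr (by nlinarith)).ne'
  rw [sinc_of_ne_zero h₀]
  field_simp

end Real

namespace Matrix

variable {ι R : Type*} [Fintype ι]

section Skew

lemma mul_self_apply_self_of_transpose_eq_neg [CommRing R] {A : Matrix ι ι R} (hA : Aᵀ = -A)
    (i : ι) : (A * A) i i = -∑ j, A i j ^ 2 := by
  rw [mul_apply, ← Finset.sum_neg_distrib]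
  refine Finset.sum_congr rfl fun j _ => ?_
  rw [show A j i = -A i j from congr_fun₂ hA i j]
  ring

variable [CommRing R] [LinearOrder R] [IsStrictOrderedRing R] {A : Matrix ι ι R}

lemma mul_self_apply_self_nonpos (hA : Aᵀ = -A) (i : ι) : (A * A) i i ≤ 0 := by
  rw [mul_self_apply_self_of_transpose_eq_neg hA, neg_nonpos]
  exact Finset.sum_nonneg fun j _ => sq_nonneg _

lemma apply_eq_zero_of_mul_self_apply_self_eq_zero (hA : Aᵀ = -A) {i : ι}
    (h : (A * A) i i = 0) (j : ι) : A i j = 0 ∧ A j i = 0 := by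
  rw [mul_self_apply_self_of_transpose_eq_neg hA, neg_eq_zero,
    Finset.sum_eq_zero_iff_of_nonneg fun j _ => sq_nonneg _] at h
  have hij : A i j = 0 := (pow_eq_zero_iff two_ne_zero).mp (h j (Finset.mem_univ j))
  exact ⟨hij, by rw [show A j i = -A i j from congr_fun₂ hA i j, hij, neg_zero]⟩

end Skew

variable [DecidableEq ι]

section Commute

variable [CommRing R] [NoZeroDivisors R] {A : Matrix ι ι R} {c : ι → R}

lemma apply_eq_zero_of_commute_diagonal (h : Commute A (diagonal c)) {i j : ι}
    (hij : c i ≠ c j) : A i j = 0 := by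
  have hc := congr_fun₂ h.eq i j
  rw [mul_diagonal, diagonal_mul] at hc
  have hzero : A i j * (c j - c i) = 0 := by linear_combination hc
  exact (mul_eq_zero.mp hzero).resolve_right (sub_ne_zero.mpr hij.symm)

lemma commute_diagonal_comp (h : Commute A (diagonal c)) (f : R → R) :
    Commute A (diagonal fun i => f (c i)) := by
  ext i j
  rw [mul_diagonal, diagonal_mul]
  by_cases hij : c i = c j
  · simp [hij, mul_comm]
  · simp [apply_eq_zero_of_commute_diagonal h hij]

end Commute

lemma commute_and_mul_self_of_diagonal_add_mem_orthogonalGroup [Field R] [CharZero R]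
    {A : Matrix ι ι R} {c : ι → R} (hA : Aᵀ = -A)
    (hP : diagonal c + A ∈ orthogonalGroup ι R) :
    Commute A (diagonal c) ∧ A * A = diagonal fun i => c i ^ 2 - 1 := by
  have hPt : (diagonal c + A)ᵀ = diagonal c - A := by
    rw [transpose_add, diagonal_transpose, hA, sub_eq_add_neg]
  have h₁ := (mem_orthogonalGroup_iff' ι R).mp hP
  have h₂ := (mem_orthogonalGroup_iff ι R).mp hP
  rw [hPt] at h₁ h₂
  have hdiff : (2 : R) • (A * diagonal c - diagonal c * A) = 0 := by
    rw [two_smul]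
    calc _ = (diagonal c + A) * (diagonal c - A) - (diagonal c - A) * (diagonal c + A) := by
          noncomm_ring
      _ = 0 := by rw [h₁, h₂, sub_self]
  have hsum : (2 : R) • (A * A - (diagonal c * diagonal c - 1)) = 0 := by
    rw [two_smul]
    calc _ = 1 + 1 - ((diagonal c + A) * (diagonal c - A) +
          (diagonal c - A) * (diagonal c + A)) := by noncomm_ring
      _ = 0 := by rw [h₁, h₂, sub_self]
  rw [smul_eq_zero, sub_eq_zero] at hdiff hsum
  refine ⟨hdiff.resolve_left two_ne_zero, ?_⟩
  rw [hsum.resolve_left two_ne_zero, diagonal_mul_diagonal, ← diagonal_one, diagonal_sub]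
  simp [sq]

section ComplexStructure

variable [CommRing R]

lemma exists_skew_mul_self_eq_neg_one (h : Even (Fintype.card ι)) :
    ∃ J : Matrix ι ι R, Jᵀ = -J ∧ J * J = -1 := by
  obtain ⟨m, hm⟩ := h
  let e : Fin m ⊕ Fin m ≃ ι := (Fintype.equivOfCardEq (by simpa using hm)).symm
  refine ⟨reindexAlgEquiv R R e (fromBlocks 0 (-1) 1 0), ?_, ?_⟩
  · ext i j
    simp only [coe_reindexAlgEquiv, transpose_apply, neg_apply, reindex_apply, submatrix_apply]
    rcases e.symm i with a | a <;> rcases e.symm j with b | b <;> simp [one_apply, eq_comm]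
  · rw [← map_mul, fromBlocks_multiply, ← map_one (reindexAlgEquiv R R e), ← map_neg,
      ← fromBlocks_one, fromBlocks_neg]
    simp

lemma exists_skew_mul_self_eq_neg_diagonal (p : ι → Prop) [DecidablePred p]
    (h : Even (Fintype.card {i // p i})) :
    ∃ J : Matrix ι ι R, Jᵀ = -J ∧ J * J = -diagonal (fun i => if p i then 1 else 0) ∧
      diagonal (fun i => if p i then 1 else 0) * J = J ∧
      J * diagonal (fun i => if p i then 1 else 0) = J := by
  obtain ⟨J, hJt, hJJ⟩ := exists_skew_mul_self_eq_neg_one (R := R) h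
  let e := Equiv.sumCompl p
  refine ⟨reindexAlgEquiv R R e (fromBlocks J 0 0 0), ?_, ?_, ?_, ?_⟩
  · ext i j
    simp only [coe_reindexAlgEquiv, transpose_apply, neg_apply, reindex_apply, submatrix_apply]
    rcases e.symm i with a | a <;> rcases e.symm j with b | b <;> simp
    exact congr_fun₂ hJt a b
  · rw [← map_mul, fromBlocks_multiply, hJJ]
    ext i j
    rcases eq_or_ne i j with rfl | hij
    · by_cases hi : p i <;> simp [e, hi]
    · by_cases hi : p i <;> by_cases hj : p j <;> simp [e, hi, hj, hij, Subtype.ext_iff]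
  all_goals
    ext i j
    by_cases hi : p i <;> by_cases hj : p j <;> simp [e, hi, hj]

end ComplexStructure

theorem exp_eq_of_mul_self_eq_neg_diagonal_sq (M : Matrix ι ι ℝ) (t : ι → ℝ)
    (h : M * M = diagonal fun i => -t i ^ 2) :
    NormedSpace.exp M = diagonal (fun i => cos (t i)) + M * diagonal (fun i => sinc (t i)) := by
  have hexp : HasSum (fun k => (k ! : ℝ)⁻¹ • M ^ k) (NormedSpace.exp M) := by
    -- `exp` is norm-independent; any algebra norm exhibits it as the sum of its series
    let : NormedRing (Matrix ι ι ℝ) := Matrix.linftyOpNormedRing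
    let : NormedAlgebra ℝ (Matrix ι ι ℝ) := Matrix.linftyOpNormedAlgebra
    exact NormedSpace.exp_series_hasSum_exp' M
  have hpow (k : ℕ) : M ^ (2 * k) = diagonal fun i => (-t i ^ 2) ^ k := by
    rw [pow_mul, sq, h, diagonal_pow]
    rfl
  refine hexp.unique (HasSum.even_add_odd ?_ ?_)
  · refine (Pi.hasSum.mpr fun i => hasSum_cos_neg_sq_pow (t i)).matrix_diagonal.congr_fun
      fun k => ?_
    rw [hpow, ← diagonal_smul]
    rfl
  · refine (((Pi.hasSum.mpr fun i => hasSum_sinc_neg_sq_pow (t i)).matrix_diagonal).mul_left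
      M).congr_fun fun k => ?_
    rw [pow_succ', hpow, ← mul_smul_comm, ← diagonal_smul]
    rfl

lemma det_exp_pos (A : Matrix ι ι ℝ) : 0 < (NormedSpace.exp A).det := by
  have hhalf : A = (2 : ℝ)⁻¹ • A + (2 : ℝ)⁻¹ • A := by rw [← add_smul]; norm_num
  have hu : IsUnit (NormedSpace.exp ((2 : ℝ)⁻¹ • A)).det :=
    (isUnit_iff_isUnit_det _).mp (isUnit_exp _)
  rw [hhalf, exp_add_of_commute _ _ (Commute.refl _), det_mul]
  exact mul_self_pos.mpr hu.ne_zero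

lemma exp_conj_of_mem_orthogonalGroup {Q : Matrix ι ι ℝ} (hQ : Q ∈ orthogonalGroup ι ℝ)
    (V : Matrix ι ι ℝ) : NormedSpace.exp (Q * V * Qᵀ) = Q * NormedSpace.exp V * Qᵀ := by
  have hinv : Q⁻¹ = Qᵀ := inv_eq_right_inv ((mem_orthogonalGroup_iff ι ℝ).mp hQ)
  rw [← hinv, exp_conj _ _ (Unitary.isUnit_coe (U := ⟨Q, hQ⟩))]


section Rotation

variable {c : ι → ℝ} {A : Matrix ι ι ℝ}

lemma sq_le_one_of_mul_self_eq (hA : Aᵀ = -A) (hsq : A * A = diagonal fun i => c i ^ 2 - 1)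
    (i : ι) : c i ^ 2 ≤ 1 := by
  have := mul_self_apply_self_nonpos hA i
  rw [hsq, diagonal_apply_eq] at this
  linarith

lemma mem_Icc_of_mul_self_eq (hA : Aᵀ = -A) (hsq : A * A = diagonal fun i => c i ^ 2 - 1)
    (i : ι) : c i ∈ Set.Icc (-1) 1 :=
  abs_le.mp ((sq_le_one_iff_abs_le_one _).mp (sq_le_one_of_mul_self_eq hA hsq i))

lemma apply_eq_zero_of_sq_eq_one (hA : Aᵀ = -A) (hsq : A * A = diagonal fun i => c i ^ 2 - 1)
    {i : ι} (hi : c i ^ 2 = 1) (j : ι) : A i j = 0 ∧ A j i = 0 :=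
  apply_eq_zero_of_mul_self_apply_self_eq_zero hA (by rw [hsq, diagonal_apply_eq, hi, sub_self]) j

lemma diagonal_indicator_mul_eq_zero (hA : Aᵀ = -A)
    (hsq : A * A = diagonal fun i => c i ^ 2 - 1) :
    (diagonal fun i => if c i = -1 then 1 else 0) * A = 0 ∧
      A * (diagonal fun i => if c i = -1 then 1 else 0) = 0 := by
  have hA0 {i : ι} (hi : c i = -1) j := apply_eq_zero_of_sq_eq_one hA hsq (by rw [hi]; norm_num) j
  constructor <;> ext i j
  · by_cases hi : c i = -1 <;> simp [hi, hA0]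
  · by_cases hj : c j = -1 <;> simp [hj, hA0]

lemma diagonal_arccos_div_sin_mul_mul_self (hA : Aᵀ = -A) (hcomm : Commute A (diagonal c))
    (hsq : A * A = diagonal fun i => c i ^ 2 - 1) :
    (diagonal (fun i => arccos (c i) / sin (arccos (c i))) * A) *
        (diagonal (fun i => arccos (c i) / sin (arccos (c i))) * A) =
      diagonal fun i => if c i = -1 then 0 else -arccos (c i) ^ 2 := by
  rw [mul_assoc, ← mul_assoc A,
    (commute_diagonal_comp hcomm fun x => arccos x / sin (arccos x)).eq, mul_assoc, hsq,
    ← mul_assoc, diagonal_mul_diagonal, diagonal_mul_diagonal]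
  congr 1
  funext i
  by_cases hi : c i = -1
  · simp [hi]
  · have hc := mem_Icc_of_mul_self_eq hA hsq i
    have := arccos_div_sin_arccos_sq_mul (lt_of_le_of_ne hc.1 (Ne.symm hi)) hc.2
    rw [if_neg hi]
    linarith

lemma diagonal_arccos_div_sin_mul_mul_diagonal_sinc (hA : Aᵀ = -A)
    (hcomm : Commute A (diagonal c)) (hsq : A * A = diagonal fun i => c i ^ 2 - 1) :
    diagonal (fun i => arccos (c i) / sin (arccos (c i))) * A *
        diagonal (fun i => sinc (arccos (c i))) = A := by
  rw [mul_assoc, (commute_diagonal_comp hcomm fun x => sinc (arccos x)).eq, ← mul_assoc,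
    diagonal_mul_diagonal]
  ext i j
  rw [diagonal_mul]
  by_cases hi : c i ^ 2 = 1
  · rw [(apply_eq_zero_of_sq_eq_one hA hsq hi j).1, mul_zero]
  · have hc := abs_lt.mp ((sq_lt_one_iff_abs_lt_one _).mp
      ((sq_le_one_of_mul_self_eq hA hsq i).lt_of_ne hi))
    rw [arccos_div_sin_arccos_mul_sinc hc.1 hc.2, one_mul]

theorem exists_skew_exp_eq_diagonal_add (hA : Aᵀ = -A) (hcomm : Commute A (diagonal c))
    (hsq : A * A = diagonal fun i => c i ^ 2 - 1) (heven : Even (Fintype.card {i // c i = -1})) :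
    ∃ V : Matrix ι ι ℝ, Vᵀ = -V ∧ NormedSpace.exp V = diagonal c + A := by
  obtain ⟨J, hJt, hJJ, hDJ, hJD⟩ :=
    exists_skew_mul_self_eq_neg_diagonal (R := ℝ) (fun i => c i = -1) heven
  obtain ⟨hDA, hAD⟩ := diagonal_indicator_mul_eq_zero hA hsq
  have hAg := (commute_diagonal_comp hcomm fun x => arccos x / sin (arccos x)).eq
  have hGG := diagonal_arccos_div_sin_mul_mul_self hA hcomm hsq
  have hGs := diagonal_arccos_div_sin_mul_mul_diagonal_sinc hA hcomm hsq
  set D : Matrix ι ι ℝ := diagonal fun i => if c i = -1 then 1 else 0 with hD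
  set g : ι → ℝ := fun i => arccos (c i) / sin (arccos (c i))
  set G := diagonal g * A
  have hGJ : G * J = 0 := by rw [mul_assoc, ← hDJ, ← mul_assoc A, hAD, zero_mul, mul_zero]
  have hJG : J * G = 0 := by
    have hDg : D * diagonal g = diagonal g * D := commute_diagonal _ _
    rw [← hJD, mul_assoc, ← mul_assoc D, hDg, mul_assoc, hDA, mul_zero, mul_zero]
  refine ⟨G + π • J, ?_, ?_⟩
  · rw [transpose_add, transpose_smul, transpose_mul, diagonal_transpose, hA, hJt, neg_mul, hAg,
      smul_neg, neg_add]
  have hsq' : (G + π • J) * (G + π • J) = diagonal fun i => -arccos (c i) ^ 2 := by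
    simp only [add_mul, mul_add, smul_mul_assoc, mul_smul_comm, hGJ, hJG, hJJ, hGG, smul_zero,
      add_zero, smul_neg, hD]
    ext i j
    rcases eq_or_ne i j with rfl | hij
    · by_cases hi : c i = -1 <;> simp [hi, sq]
    · simp [hij]
  have hJs : J * diagonal (fun i => sinc (arccos (c i))) = 0 := by
    have hDs : D * diagonal (fun i => sinc (arccos (c i))) = 0 := by
      rw [hD, diagonal_mul_diagonal, ← diagonal_zero]
      congr 1
      funext i
      by_cases hi : c i = -1 <;> simp [hi, sinc_pi]
    rw [← hJD, mul_assoc, hDs, mul_zero]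
  have hcos : (fun i => cos (arccos (c i))) = c := funext fun i => by
    have hc := mem_Icc_of_mul_self_eq hA hsq i
    exact cos_arccos hc.1 hc.2
  rw [exp_eq_of_mul_self_eq_neg_diagonal_sq _ _ hsq', hcos, add_mul, smul_mul_assoc, hJs, hGs,
    smul_zero, add_zero]

theorem even_card_eq_neg_one (hA : Aᵀ = -A) (hcomm : Commute A (diagonal c))
    (hsq : A * A = diagonal fun i => c i ^ 2 - 1) (hdet : (diagonal c + A).det = 1) :
    Even (Fintype.card {i // c i = -1}) := by
  set ε : ι → ℝ := fun i => if c i = -1 then -1 else 1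
  have hsqε : A * A = diagonal fun i => (c i * ε i) ^ 2 - 1 := by
    rw [hsq]
    congr 1
    funext i
    by_cases hi : c i = -1 <;> simp [ε, hi]
  have hnone : Fintype.card {i // c i * ε i = -1} = 0 := by
    refine Fintype.card_eq_zero_iff.mpr ⟨fun ⟨i, hi⟩ => ?_⟩
    by_cases h : c i = -1 <;> simp [ε, h] at hi
    norm_num at hi
  obtain ⟨V, -, hV⟩ := exists_skew_exp_eq_diagonal_add hA
    (commute_diagonal_comp hcomm fun x => x * if x = -1 then -1 else 1) hsqε (hnone ▸ .zero)
  have hflip : diagonal (fun i => c i * ε i) + A = (diagonal c + A) * diagonal ε := by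
    rw [add_mul, diagonal_mul_diagonal]
    congr 1
    ext i j
    rw [mul_diagonal]
    by_cases hj : c j = -1
    · simp [ε, hj, (apply_eq_zero_of_sq_eq_one hA hsq (by rw [hj]; norm_num) i).2]
    · simp [ε, hj]
  have hpos := det_exp_pos V
  rw [hV, hflip, det_mul, hdet, one_mul, det_diagonal, Finset.prod_ite, Finset.prod_const,
    Finset.prod_const_one, mul_one, ← Fintype.card_subtype] at hpos
  by_contra hodd
  rw [(Nat.not_even_iff_odd.mp hodd).neg_one_pow] at hpos
  norm_num at hpos

end Rotation

theorem exists_skew_exp_eq_of_add_transpose_eq_diagonal {P : Matrix ι ι ℝ} {d : ι → ℝ}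
    (hP : P ∈ orthogonalGroup ι ℝ) (hdet : P.det = 1) (hd : P + Pᵀ = diagonal d) :
    ∃ V : Matrix ι ι ℝ, Vᵀ = -V ∧ NormedSpace.exp V = P := by
  set c : ι → ℝ := fun i => d i / 2
  obtain ⟨A, rfl⟩ : ∃ A, P = diagonal c + A := ⟨P - diagonal c, by abel⟩
  have hA : Aᵀ = -A := by
    have hd2 : diagonal d = diagonal c + diagonal c := by
      rw [diagonal_add]
      simp [c]
    refine eq_neg_of_add_eq_zero_left ?_
    calc Aᵀ + A = diagonal c + A + (diagonal c + A)ᵀ - (diagonal c + diagonal c) := by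
          rw [transpose_add, diagonal_transpose]; abel
      _ = 0 := by rw [hd, hd2, sub_self]
  obtain ⟨hcomm, hsq⟩ := commute_and_mul_self_of_diagonal_add_mem_orthogonalGroup hA hP
  exact exists_skew_exp_eq_diagonal_add hA hcomm hsq (even_card_eq_neg_one hA hcomm hsq hdet)

lemma exists_mem_orthogonalGroup_transpose_mul_mul_eq_diagonal {S : Matrix ι ι ℝ}
    (hS : Sᵀ = S) :
    ∃ Q ∈ orthogonalGroup ι ℝ, ∃ d : ι → ℝ, Qᵀ * S * Q = diagonal d := by
  have hH : S.IsHermitian := by rwa [IsHermitian, conjTranspose_eq_transpose_of_trivial]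
  refine ⟨hH.eigenvectorUnitary, hH.eigenvectorUnitary.2, hH.eigenvalues, ?_⟩
  have hdiag := hH.conjStarAlgAut_star_eigenvectorUnitary
  rw [Unitary.conjStarAlgAut_apply, Unitary.coe_star, star_star] at hdiag
  rwa [star_eq_conjTranspose, conjTranspose_eq_transpose_of_trivial] at hdiag

end Matrix

theorem exp_skew_surjective_onto_SO_general (n : ℕ) (R : Matrix (Fin n) (Fin n) ℝ)
    (h2 : R * Rᵀ = 1) (h3 : R.det = 1) :
    ∃ V : Matrix (Fin n) (Fin n) ℝ, Vᵀ = -V ∧ NormedSpace.exp V = R := by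
  have hR : R ∈ orthogonalGroup (Fin n) ℝ := (mem_orthogonalGroup_iff _ _).mpr h2
  obtain ⟨Q, hQ, d, hd⟩ := exists_mem_orthogonalGroup_transpose_mul_mul_eq_diagonal
    (S := R + Rᵀ) (by rw [transpose_add, transpose_transpose, add_comm])
  have hQQt : Q * Qᵀ = 1 := (mem_orthogonalGroup_iff _ _).mp hQ
  have hP : Qᵀ * R * Q ∈ orthogonalGroup (Fin n) ℝ :=
    conjTranspose_eq_transpose_of_trivial Q ▸ mul_mem (mul_mem (Unitary.star_mem hQ) hR) hQ
  have hPdet : (Qᵀ * R * Q).det = 1 := by rw [det_mul_comm, ← mul_assoc, hQQt, one_mul, h3]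
  have hPd : Qᵀ * R * Q + (Qᵀ * R * Q)ᵀ = diagonal d := by
    rw [← hd, transpose_mul, transpose_mul, transpose_transpose, mul_add, add_mul,
      mul_assoc Qᵀ Rᵀ]
  obtain ⟨V, hV, hexp⟩ := exists_skew_exp_eq_of_add_transpose_eq_diagonal hP hPdet hPd
  refine ⟨Q * V * Qᵀ, by simp [transpose_mul, hV, mul_assoc], ?_⟩
  rw [exp_conj_of_mem_orthogonalGroup hQ]
  calc Q * NormedSpace.exp V * Qᵀ = Q * Qᵀ * R * (Q * Qᵀ) := by
        rw [hexp]; simp only [mul_assoc]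
    _ = R := by rw [hQQt, one_mul, mul_one]

/-- Every special orthogonal matrix is the matrix exponential of a
skew-symmetric matrix: `exp_m|_{Skew(n)} : Skew(n) → SO(n)` is surjective. -/
theorem exp_skew_surjective_onto_SO (n : ℕ) (R : Matrix (Fin n) (Fin n) ℝ)
    (h1 : Rᵀ * R = 1) (h2 : R * Rᵀ = 1) (h3 : R.det = 1) :
    ∃ V : Matrix (Fin n) (Fin n) ℝ, Vᵀ = -V ∧ NormedSpace.exp V = R :=
  exp_skew_surjective_onto_SO_general n R h2 h3
end

section
/- Let U : J → ℝ^{n×m}, Σ : J → ℝ^{m×m}, Z : J → ℝ^{m×m} be matrix functions differentiable at μ₀ ∈ J such that for all μ ∈ J: U(μ)ᵀU(μ) = I_m, Z(μ)ᵀZ(μ) = I_m, and Σ(μ) = diag(σ₁(μ),…,σ_m(μ)) is diagonal. Set S(μ) = U(μ)Σ(μ)Z(μ)ᵀ. Then the derivative of each singular value satisfies σ̇_j(μ₀) = (u^j)ᵀ · Ṡ(μ₀) · z^j for j = 1,…,m, where u^j and z^j denote the j-th columns of U(μ₀) and Z(μ₀) respectively, and Ṡ, σ̇_j denote derivatives at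 μ₀. -/
open Matrix Filter Topology

/-!
Differentiate `S = U Σ Zᵀ` by the product rule and sandwich the result between `Uᵀ` and `Z`.
Orthonormality gives `Uᵀ S' Z = Uᵀ U' Σ + Σ' + Σ Z'ᵀ Z`, and differentiating `Uᵀ U = 1` and
`Zᵀ Z = 1` shows that `Uᵀ U'` and `Zᵀ Z'` are skew-symmetric, so their diagonals vanish.
Since `Σ` is diagonal, the `(j, j)` entries of the outer two terms are products with these
vanishing diagonal entries, leaving `(Uᵀ S' Z)_jj = Σ'_jj`.
-/

section EntrywiseDeriv

variable {𝕜 : Type*} [NontriviallyNormedField 𝕜] {l m n : Type*}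

/-- Matrices carry no global norm instance, so derivatives of matrix-valued maps are taken
entrywise. -/
def HasEntrywiseDerivAt (A : 𝕜 → Matrix m n 𝕜) (A' : Matrix m n 𝕜) (x : 𝕜) : Prop :=
  ∀ i j, HasDerivAt (fun t => A t i j) (A' i j) x

theorem hasEntrywiseDerivAt_const (C : Matrix m n 𝕜) (x : 𝕜) :
    HasEntrywiseDerivAt (fun _ => C) 0 x :=
  fun i j => hasDerivAt_const x (C i j)

namespace HasEntrywiseDerivAt

variable {A B : 𝕜 → Matrix m n 𝕜} {A' A'' : Matrix m n 𝕜} {x : 𝕜}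

theorem unique (h : HasEntrywiseDerivAt A A' x) (h' : HasEntrywiseDerivAt A A'' x) :
    A' = A'' :=
  Matrix.ext fun i j => (h i j).unique (h' i j)

theorem congr_of_eventuallyEq (h : HasEntrywiseDerivAt A A' x) (hBA : B =ᶠ[𝓝 x] A) :
    HasEntrywiseDerivAt B A' x :=
  fun i j => (h i j).congr_of_eventuallyEq (hBA.mono fun _ ht => congrArg (fun M => M i j) ht)

theorem transpose (h : HasEntrywiseDerivAt A A' x) :
    HasEntrywiseDerivAt (fun t => (A t)ᵀ) A'ᵀ x :=
  fun i j => h j i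

theorem mul [Fintype n] {C : 𝕜 → Matrix n l 𝕜} {C' : Matrix n l 𝕜}
    (hA : HasEntrywiseDerivAt A A' x) (hC : HasEntrywiseDerivAt C C' x) :
    HasEntrywiseDerivAt (fun t => A t * C t) (A' * C x + A x * C') x := fun i k => by
  simpa only [mul_apply, Matrix.add_apply, Finset.sum_add_distrib] using
    HasDerivAt.fun_sum (u := Finset.univ) fun j _ => (hA i j).fun_mul (hC j k)

theorem transpose_mul_add_eq_zero [Fintype m] [DecidableEq n]
    (hA : HasEntrywiseDerivAt A A' x) (horth : ∀ᶠ t in 𝓝 x, (A t)ᵀ * A t = 1) :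
    A'ᵀ * A x + (A x)ᵀ * A' = 0 :=
  (hA.transpose.mul hA).unique ((hasEntrywiseDerivAt_const 1 x).congr_of_eventuallyEq horth)

theorem diag_transpose_mul_eq_zero [CharZero 𝕜] [Fintype m] [DecidableEq n]
    (hA : HasEntrywiseDerivAt A A' x) (horth : ∀ᶠ t in 𝓝 x, (A t)ᵀ * A t = 1) :
    ((A x)ᵀ * A').diag = 0 := by
  funext j
  have h := congrFun (congrFun (hA.transpose_mul_add_eq_zero horth) j) j
  rw [Matrix.add_apply, Matrix.zero_apply, ← transpose_transpose (A'ᵀ * A x), transpose_mul,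
    transpose_transpose, transpose_apply] at h
  exact add_self_eq_zero.mp h

end HasEntrywiseDerivAt

end EntrywiseDeriv

theorem Matrix.transpose_mul_mul_apply {R : Type*} [NonUnitalSemiring R] {l m n o : Type*}
    [Fintype l] [Fintype n] (A : Matrix l m R) (M : Matrix l n R) (B : Matrix n o R)
    (i : m) (j : o) :
    (Aᵀ * M * B) i j = ∑ a, ∑ b, A a i * M a b * B b j := by
  simp only [mul_apply, transpose_apply, Finset.sum_mul]
  exact Finset.sum_comm

/-- Differentiating the SVD `S(μ) = U(μ)Σ(μ)Z(μ)ᵀ` (with `U`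
column-orthonormal, `Z` orthogonal, `Σ` diagonal on a neighborhood `J` of `μ₀`):
the derivative of the `j`-th singular value satisfies
`σ̇_j(μ₀) = (u^j)ᵀ·Ṡ(μ₀)·z^j`, where `u^j, z^j` are the `j`-th columns of
`U(μ₀), Z(μ₀)` and `Ṡ(μ₀) = S'` is the derivative of `S` at `μ₀`. -/
theorem svd_singular_value_derivative (n m : ℕ) (J : Set ℝ) (μ₀ : ℝ)
    (hJ : J ∈ nhds μ₀)
    (U : ℝ → Matrix (Fin n) (Fin m) ℝ)
    (Sig Z : ℝ → Matrix (Fin m) (Fin m) ℝ)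
    (U' S' : Matrix (Fin n) (Fin m) ℝ)
    (Sig' Z' : Matrix (Fin m) (Fin m) ℝ)
    (hUorth : ∀ μ ∈ J, (U μ)ᵀ * U μ = 1)
    (hZorth : ∀ μ ∈ J, (Z μ)ᵀ * Z μ = 1 ∧ Z μ * (Z μ)ᵀ = 1)
    (hdiag : ∀ μ ∈ J, (Sig μ).IsDiag)
    (hU : ∀ i j, HasDerivAt (fun μ => U μ i j) (U' i j) μ₀)
    (hSig : ∀ i j, HasDerivAt (fun μ => Sig μ i j) (Sig' i j) μ₀)
    (hZ : ∀ i j, HasDerivAt (fun μ => Z μ i j) (Z' i j) μ₀)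
    (hS : ∀ i j, HasDerivAt (fun μ => (U μ * Sig μ * (Z μ)ᵀ) i j) (S' i j) μ₀) :
    ∀ j : Fin m, Sig' j j = ∑ a : Fin n, ∑ b : Fin m, U μ₀ a j * S' a b * Z μ₀ b j := by
  intro j
  have hU : HasEntrywiseDerivAt U U' μ₀ := hU
  have hSig : HasEntrywiseDerivAt Sig Sig' μ₀ := hSig
  have hZ : HasEntrywiseDerivAt Z Z' μ₀ := hZ
  have hS : HasEntrywiseDerivAt (fun μ => U μ * Sig μ * (Z μ)ᵀ) S' μ₀ := hS
  have hμ₀ : μ₀ ∈ J := mem_of_mem_nhds hJ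
  have hUU (X : Matrix (Fin m) (Fin m) ℝ) : (U μ₀)ᵀ * (U μ₀ * X) = X := by
    rw [← Matrix.mul_assoc, hUorth μ₀ hμ₀, Matrix.one_mul]
  have hS' : S' = (U' * Sig μ₀ + U μ₀ * Sig') * (Z μ₀)ᵀ + U μ₀ * Sig μ₀ * Z'ᵀ :=
    hS.unique ((hU.mul hSig).mul hZ.transpose)
  have hproj : (U μ₀)ᵀ * S' * Z μ₀ = (U μ₀)ᵀ * U' * Sig μ₀ + Sig' + Sig μ₀ * (Z'ᵀ * Z μ₀) := by
    simp only [hS', Matrix.mul_add, Matrix.add_mul, Matrix.mul_assoc, (hZorth μ₀ hμ₀).1,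
      Matrix.mul_one, hUU]
  have hUskew : ((U μ₀)ᵀ * U') j j = 0 :=
    congrFun (hU.diag_transpose_mul_eq_zero (eventually_of_mem hJ hUorth)) j
  have hZskew : (Z'ᵀ * Z μ₀) j j = 0 := by
    rw [← transpose_transpose (Z μ₀), ← transpose_mul, transpose_apply]
    exact congrFun (hZ.diag_transpose_mul_eq_zero
      (eventually_of_mem hJ fun μ hμ => (hZorth μ hμ).1)) j
  rw [← transpose_mul_mul_apply, hproj, ← (hdiag μ₀ hμ₀).diagonal_diag]
  simp only [Matrix.add_apply, mul_diagonal, diagonal_mul, hUskew, hZskew, zero_mul, mul_zero,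
    zero_add, add_zero]
end
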